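/- Parametrization of the twisted complete sum of a product of Kloosterman sums: Let q₁, q₂ be positive integers and a, b, m integers. Then Σ_{β=0}^{q₁q₂−1} S(a, β; q₁) · S(b, β; q₂) · e(mβ/(q₁q₂)) = q₁q₂ · Σ_{(x,y)} e(a·x̄/q₁) · e(b·ȳ/q₂), where the sum on the right runs over residues x modulo q₁ with gcd(x,q₁)=1 and y modulo q₂ with gcd(y,q₂)=1 satisfying the congruence q₂·x + q₁·y ≡ −m (mod q₁q₂), and x̄, ȳ denote multiplicative inverses of x modulo q₁ and of y modulo q₂ respectively. -/
import Mathlib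


open scoped Classical

/-- `e(x) = e^{2πix}`. -/
noncomputable def e2pi (x : ℝ) : ℂ := Complex.exp (2 * Real.pi * Complex.I * x)

lemma e2pi_add (x y : ℝ) : e2pi (x + y) = e2pi x * e2pi y := by
  rw [e2pi, e2pi, e2pi, ← Complex.exp_add]
  congr 1
  push_cast
  ring

lemma e2pi_int (n : ℤ) : e2pi (n : ℝ) = 1 := by
  rw [e2pi, show (2 * Real.pi * Complex.I * ((n : ℝ) : ℂ)) = (n : ℂ) * (2 * Real.pi * Complex.I) by
    push_cast; ring]
  exact Complex.exp_int_mul_two_pi_mul_I n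

lemma sum_e2pi_eq (N : ℕ) (hN : 0 < N) (t : ℤ) :
    ∑ β ∈ Finset.range N, e2pi (((t * (β : ℤ) : ℤ) : ℝ) / (N : ℝ)) =
      if (N : ℤ) ∣ t then (N : ℂ) else 0 := by
  have hN' : (N : ℝ) ≠ 0 := Nat.cast_ne_zero.mpr hN.ne'
  have hz : ∀ β : ℕ, e2pi (((t * (β : ℤ) : ℤ) : ℝ) / (N : ℝ)) = (e2pi ((t : ℝ) / N)) ^ β := by
    intro β
    rw [e2pi, e2pi, ← Complex.exp_nat_mul]
    congr 1
    push_cast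
    ring
  simp_rw [hz]
  by_cases hd : (N : ℤ) ∣ t
  · obtain ⟨k, rfl⟩ := hd
    have h1 : e2pi ((((N : ℤ) * k : ℤ) : ℝ) / N) = 1 := by
      rw [show (((N : ℤ) * k : ℤ) : ℝ) / N = ((k : ℤ) : ℝ) by push_cast; field_simp]
      exact e2pi_int k
    push_cast at h1 ⊢
    rw [h1]
    simp
  · rw [if_neg hd]
    have hzne : e2pi ((t : ℝ) / N) ≠ 1 := by
      intro h
      rw [e2pi, Complex.exp_eq_one_iff] at h
      obtain ⟨n, hn⟩ := h
      have hI : (2 * Real.pi * Complex.I : ℂ) ≠ 0 := by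
        simp [Real.pi_ne_zero, Complex.I_ne_zero]
      have h2 : (((t : ℝ) / N : ℝ) : ℂ) = (n : ℂ) :=
        mul_left_cancel₀ hI (hn.trans (mul_comm _ _))
      have h3 : (t : ℝ) / N = (n : ℝ) := by exact_mod_cast h2
      rw [div_eq_iff hN'] at h3
      apply hd
      refine ⟨n, ?_⟩
      have h4 : (t : ℝ) = ((N * n : ℤ) : ℝ) := by push_cast; linarith
      exact_mod_cast h4
    have hpow : e2pi ((t : ℝ) / N) ^ N = 1 := by
      rw [← hz N]
      rw [show ((t * (N : ℤ) : ℤ) : ℝ) / (N : ℝ) = ((t : ℤ) : ℝ) by push_cast; field_simp]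
      exact e2pi_int t
    rw [geom_sum_eq hzne, hpow, sub_self, zero_div]

lemma zmod_inv_val {n : ℕ} [NeZero n] {x : ℕ} (hx : x < n) (hcop : Nat.Coprime x n) :
    ((x : ZMod n)⁻¹).val < n ∧ Nat.Coprime ((x : ZMod n)⁻¹).val n ∧
      (((((x : ZMod n)⁻¹).val : ℕ) : ZMod n)⁻¹).val = x := by
  have hu : IsUnit (x : ZMod n) := (ZMod.isUnit_iff_coprime x n).mpr hcop
  refine ⟨ZMod.val_lt _, ?_, ?_⟩
  · have h1 : (x : ZMod n)⁻¹ = ((hu.unit⁻¹ : (ZMod n)ˣ) : ZMod n) := by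
      rw [← ZMod.inv_coe_unit, hu.unit_spec]
    rw [h1]
    exact ZMod.val_coe_unit_coprime _
  · rw [ZMod.natCast_zmod_val, ZMod.inv_eq_of_mul_eq_one n _ _ (ZMod.inv_mul_of_unit _ hu),
      ZMod.val_cast_of_lt hx]

/-- The Kloosterman sum `S(a,b;c) = ∑_{x mod c, gcd(x,c)=1} e((a·x + b·x̄)/c)`,
where `x̄` is a multiplicative inverse of `x` modulo `c`. -/
noncomputable def kloosterman (a b : ℤ) (c : ℕ) : ℂ :=
  ∑ x ∈ (Finset.range c).filter (fun x => Nat.Coprime x c),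
    e2pi (((a * (x : ℤ) + b * ((((x : ZMod c)⁻¹ : ZMod c).val : ℕ) : ℤ) : ℤ) : ℝ) / (c : ℝ))

/-- Parametrization of the twisted complete sum of a product of Kloosterman sums:
`∑_{β=0}^{q₁q₂−1} S(a, β; q₁) · S(b, β; q₂) · e(mβ/(q₁q₂))
  = q₁q₂ · ∑_{(x,y)} e(a·x̄/q₁) · e(b·ȳ/q₂)`,
the sum on the right running over residues `x mod q₁`, `y mod q₂`, coprime to the
respective moduli, with `q₂·x + q₁·y ≡ −m (mod q₁q₂)`. -/
theorem twisted_kloosterman_pair_sum (q₁ q₂ : ℕ) (hq₁ : 0 < q₁) (hq₂ : 0 < q₂)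
    (a b m : ℤ) :
    (∑ β ∈ Finset.range (q₁ * q₂),
        kloosterman a (β : ℤ) q₁ * kloosterman b (β : ℤ) q₂ *
          e2pi (((m * (β : ℤ) : ℤ) : ℝ) / ((q₁ : ℝ) * (q₂ : ℝ))))
      = ((q₁ : ℂ) * (q₂ : ℂ)) *
        ∑ p ∈ (Finset.range q₁ ×ˢ Finset.range q₂).filter
            (fun p => Nat.Coprime p.1 q₁ ∧ Nat.Coprime p.2 q₂ ∧
              ((q₂ : ℤ) * (p.1 : ℤ) + (q₁ : ℤ) * (p.2 : ℤ) ≡ -m [ZMOD ((q₁ : ℤ) * (q₂ : ℤ))])),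
          e2pi (((a * ((((p.1 : ZMod q₁)⁻¹ : ZMod q₁).val : ℕ) : ℤ) : ℤ) : ℝ) / (q₁ : ℝ)) *
            e2pi (((b * ((((p.2 : ZMod q₂)⁻¹ : ZMod q₂).val : ℕ) : ℤ) : ℤ) : ℝ) / (q₂ : ℝ)) := by
  haveI : NeZero q₁ := ⟨hq₁.ne'⟩
  haveI : NeZero q₂ := ⟨hq₂.ne'⟩
  have hq₁' : (q₁ : ℝ) ≠ 0 := Nat.cast_ne_zero.mpr hq₁.ne'
  have hq₂' : (q₂ : ℝ) ≠ 0 := Nat.cast_ne_zero.mpr hq₂.ne'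
  set N : ℕ := q₁ * q₂ with hN
  have hNpos : 0 < N := Nat.mul_pos hq₁ hq₂
  set S₁ := (Finset.range q₁).filter (fun x => Nat.Coprime x q₁) with hS₁
  set S₂ := (Finset.range q₂).filter (fun y => Nat.Coprime y q₂) with hS₂
  -- abbreviations for the inverses
  set u : ℕ → ℕ := fun x => ((x : ZMod q₁)⁻¹).val with hu
  set v : ℕ → ℕ := fun y => ((y : ZMod q₂)⁻¹).val with hv
  -- the per-(x,y) inner sum over β
  have step1 : (∑ β ∈ Finset.range N,
        kloosterman a (β : ℤ) q₁ * kloosterman b (β : ℤ) q₂ *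
          e2pi (((m * (β : ℤ) : ℤ) : ℝ) / ((q₁ : ℝ) * (q₂ : ℝ))))
      = ∑ x ∈ S₁, ∑ y ∈ S₂,
          (e2pi (((a * (x : ℤ) : ℤ) : ℝ) / (q₁ : ℝ)) * e2pi (((b * (y : ℤ) : ℤ) : ℝ) / (q₂ : ℝ))) *
            ∑ β ∈ Finset.range N,
              e2pi ((((((q₂ : ℤ) * (u x : ℤ) + (q₁ : ℤ) * (v y : ℤ) + m) * (β : ℤ)) : ℤ) : ℝ) / (N : ℝ)) := by
    rw [show (∑ β ∈ Finset.range N,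
        kloosterman a (β : ℤ) q₁ * kloosterman b (β : ℤ) q₂ *
          e2pi (((m * (β : ℤ) : ℤ) : ℝ) / ((q₁ : ℝ) * (q₂ : ℝ))))
      = ∑ β ∈ Finset.range N, ∑ x ∈ S₁, ∑ y ∈ S₂,
          e2pi (((a * (x : ℤ) + (β : ℤ) * (u x : ℤ) : ℤ) : ℝ) / (q₁ : ℝ)) *
          e2pi (((b * (y : ℤ) + (β : ℤ) * (v y : ℤ) : ℤ) : ℝ) / (q₂ : ℝ)) *
          e2pi (((m * (β : ℤ) : ℤ) : ℝ) / ((q₁ : ℝ) * (q₂ : ℝ))) by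
        refine Finset.sum_congr rfl fun β _ => ?_
        rw [kloosterman, kloosterman, Finset.sum_mul_sum, Finset.sum_mul]
        refine Finset.sum_congr rfl fun x _ => ?_
        rw [Finset.sum_mul]]
    rw [Finset.sum_comm]
    refine Finset.sum_congr rfl fun x _ => ?_
    rw [Finset.sum_comm]
    refine Finset.sum_congr rfl fun y _ => ?_
    rw [Finset.mul_sum]
    refine Finset.sum_congr rfl fun β _ => ?_
    rw [← e2pi_add, ← e2pi_add, ← e2pi_add, ← e2pi_add]
    congr 1
    push_cast [hN]
    field_simp
    ring
  rw [step1]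
  -- evaluate the geometric sums
  have step2 : ∀ x ∈ S₁, ∀ y ∈ S₂,
      (∑ β ∈ Finset.range N,
        e2pi ((((((q₂ : ℤ) * (u x : ℤ) + (q₁ : ℤ) * (v y : ℤ) + m) * (β : ℤ)) : ℤ) : ℝ) / (N : ℝ)))
      = if ((N : ℤ) ∣ ((q₂ : ℤ) * (u x : ℤ) + (q₁ : ℤ) * (v y : ℤ) + m)) then (N : ℂ) else 0 :=
    fun x _ y _ => sum_e2pi_eq N hNpos _
  rw [Finset.sum_congr rfl (fun x hx => Finset.sum_congr rfl (fun y hy => by rw [step2 x hx y hy]))]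
  -- turn into a filtered sum over pairs
  have step3 : (∑ x ∈ S₁, ∑ y ∈ S₂,
      (e2pi (((a * (x : ℤ) : ℤ) : ℝ) / (q₁ : ℝ)) * e2pi (((b * (y : ℤ) : ℤ) : ℝ) / (q₂ : ℝ))) *
        (if ((N : ℤ) ∣ ((q₂ : ℤ) * (u x : ℤ) + (q₁ : ℤ) * (v y : ℤ) + m)) then (N : ℂ) else 0))
      = ∑ p ∈ (S₁ ×ˢ S₂).filter
          (fun p => (N : ℤ) ∣ ((q₂ : ℤ) * (u p.1 : ℤ) + (q₁ : ℤ) * (v p.2 : ℤ) + m)),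
          (N : ℂ) * (e2pi (((a * (p.1 : ℤ) : ℤ) : ℝ) / (q₁ : ℝ)) *
            e2pi (((b * (p.2 : ℤ) : ℤ) : ℝ) / (q₂ : ℝ))) := by
    conv_rhs => rw [Finset.sum_filter, Finset.sum_product]
    refine Finset.sum_congr rfl fun x _ => Finset.sum_congr rfl fun y _ => ?_
    by_cases h : (N : ℤ) ∣ ((q₂ : ℤ) * (u x : ℤ) + (q₁ : ℤ) * (v y : ℤ) + m)
    · rw [if_pos h, if_pos h]; ring
    · rw [if_neg h, if_neg h]; ring
  rw [step3]
  -- RHS: pull the constant inside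
  rw [show ((q₁ : ℂ) * (q₂ : ℂ)) = (N : ℂ) by push_cast [hN]; ring, Finset.mul_sum]
  -- final bijection
  refine Finset.sum_nbij' (fun p => (u p.1, v p.2)) (fun p => (u p.1, v p.2)) ?_ ?_ ?_ ?_ ?_
  · intro p hp
    simp only [Finset.mem_filter, Finset.mem_product, hS₁, hS₂] at hp
    obtain ⟨⟨⟨hx1, hx2⟩, ⟨hy1, hy2⟩⟩, hdvd⟩ := hp
    simp only [Finset.mem_range] at hx1 hy1
    obtain ⟨hult, hucop, -⟩ := zmod_inv_val hx1 hx2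
    obtain ⟨hvlt, hvcop, -⟩ := zmod_inv_val hy1 hy2
    simp only [Finset.mem_filter, Finset.mem_product, Finset.mem_range]
    refine ⟨⟨hult, hvlt⟩, hucop, hvcop, ?_⟩
    rw [show ((q₁ : ℤ) * (q₂ : ℤ)) = (N : ℤ) by push_cast [hN]; ring]
    rw [Int.modEq_iff_dvd, show -m - ((q₂ : ℤ) * (u p.1 : ℤ) + (q₁ : ℤ) * (v p.2 : ℤ))
      = -((q₂ : ℤ) * (u p.1 : ℤ) + (q₁ : ℤ) * (v p.2 : ℤ) + m) by ring, dvd_neg]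
    exact hdvd
  · intro p hp
    simp only [Finset.mem_filter, Finset.mem_product, Finset.mem_range] at hp
    obtain ⟨⟨hx1, hy1⟩, hx2, hy2, hmod⟩ := hp
    obtain ⟨hult, hucop, hx3⟩ := zmod_inv_val hx1 hx2
    obtain ⟨hvlt, hvcop, hy3⟩ := zmod_inv_val hy1 hy2
    simp only [Finset.mem_filter, Finset.mem_product, hS₁, hS₂, Finset.mem_range]
    refine ⟨⟨⟨hult, hucop⟩, hvlt, hvcop⟩, ?_⟩
    have e1 : u (u p.1) = p.1 := hx3
    have e2 : v (v p.2) = p.2 := hy3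
    show (N : ℤ) ∣ ((q₂ : ℤ) * (u (u p.1) : ℤ) + (q₁ : ℤ) * (v (v p.2) : ℤ) + m)
    rw [e1, e2]
    rw [show ((q₁ : ℤ) * (q₂ : ℤ)) = (N : ℤ) by push_cast [hN]; ring] at hmod
    rw [Int.modEq_iff_dvd, show -m - ((q₂ : ℤ) * (p.1 : ℤ) + (q₁ : ℤ) * (p.2 : ℤ))
      = -((q₂ : ℤ) * (p.1 : ℤ) + (q₁ : ℤ) * (p.2 : ℤ) + m) by ring, dvd_neg] at hmod
    exact hmod
  · intro p hp
    simp only [Finset.mem_filter, Finset.mem_product, hS₁, hS₂, Finset.mem_range] at hp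
    obtain ⟨⟨⟨hx1, hx2⟩, hy1, hy2⟩, -⟩ := hp
    obtain ⟨-, -, hx3⟩ := zmod_inv_val hx1 hx2
    obtain ⟨-, -, hy3⟩ := zmod_inv_val hy1 hy2
    simp only [hu, hv] at hx3 hy3 ⊢
    exact Prod.ext hx3 hy3
  · intro p hp
    simp only [Finset.mem_filter, Finset.mem_product, Finset.mem_range] at hp
    obtain ⟨⟨hx1, hy1⟩, hx2, hy2, -⟩ := hp
    obtain ⟨-, -, hx3⟩ := zmod_inv_val hx1 hx2
    obtain ⟨-, -, hy3⟩ := zmod_inv_val hy1 hy2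
    simp only [hu, hv] at hx3 hy3 ⊢
    exact Prod.ext hx3 hy3
  · intro p hp
    simp only [Finset.mem_filter, Finset.mem_product, hS₁, hS₂, Finset.mem_range] at hp
    obtain ⟨⟨⟨hx1, hx2⟩, hy1, hy2⟩, -⟩ := hp
    obtain ⟨-, -, hx3⟩ := zmod_inv_val hx1 hx2
    obtain ⟨-, -, hy3⟩ := zmod_inv_val hy1 hy2
    simp only [hu, hv] at hx3 hy3 ⊢
    rw [hx3, hy3]
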